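/- Let F be a field of characteristic 0 and let G be a connected finite simple graph of order p and size q = p + 1 such that every pair of two distinct edges of G is the support of u² for some u : V(G) → F, but G is not edge-square over F. Then every vertex of G has degree at least 2, G contains no cycle of even length, and G contains two cycles of odd length having no edge in common. -/

import Mathlib

/-- `edgeVal u e` is the sum of the values of `u` at the two endpoints of `e`,
written `λ_e(u)` in the paper. -/
def edgeVal {V F : Type*} [Field F] (u : V → F) : Sym2 V → F :=
  Sym2.lift ⟨fun x y => u x + u y, fun _ _ => add_comm _ _⟩

/-- `G` is edge-square over `F`: every edge is exactly the support of a square `u²`. -/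
def EdgeSquare {V : Type*} (F : Type*) [Field F] (G : SimpleGraph V) : Prop :=
  ∀ e ∈ G.edgeSet, ∃ u : V → F,
    {f : Sym2 V | f ∈ G.edgeSet ∧ edgeVal u f ≠ 0} = {e}

/-- Every pair of distinct edges of `G` is the support of a square `u²`. -/
def PairSquare {V : Type*} (F : Type*) [Field F] (G : SimpleGraph V) : Prop :=
  ∀ e ∈ G.edgeSet, ∀ f ∈ G.edgeSet, e ≠ f → ∃ u : V → F,
    {g : Sym2 V | g ∈ G.edgeSet ∧ edgeVal u g ≠ 0} = {e, f}

/-!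
If `λ_{ab}(u) = 0` then `u b = -u a`, so along a walk on which `λ(u)` vanishes at every edge but
one edge `f`, used once, `u` at the end is not `(-1)^length` times `u` at the start. Taking `u`
with support `{e, f}`, no closed walk of even length uses `f` once and misses `e`. An even cycle
has at most `p < q` edges, so it misses an edge: there are no even cycles. If two odd cycles pass
through an edge `xy` and the first has an edge `f` that the second lacks, their two `y`–`x` paths,
one followed by the other reversed, form such a closed walk with `e = xy`. Deleting an edge of an odd cycle leaves a connected graph
with `p` edges; its cycle is odd and avoids the deleted edge, so it shares no edge with the first.
Finally, a pendant edge at `v` is the support of the indicator of `v`, and one square edge makes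
every edge a square by subtracting multiples of it from the witnesses of pairs.
-/

section SquareSupport

variable {V F : Type*} [Field F]

@[simp] lemma edgeVal_mk (u : V → F) (a b : V) : edgeVal u s(a, b) = u a + u b := rfl

lemma edgeVal_sub_smul (u w : V → F) (c : F) (e : Sym2 V) :
    edgeVal (u - c • w) e = edgeVal u e - c * edgeVal w e := by
  induction e using Sym2.ind
  simp only [edgeVal_mk, Pi.sub_apply, Pi.smul_apply, smul_eq_mul]
  ring

namespace SimpleGraph

/-- The support of `u²` in the paper. -/
def sqSupport (G : SimpleGraph V) (u : V → F) : Set (Sym2 V) :=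
  {g | g ∈ G.edgeSet ∧ edgeVal u g ≠ 0}

variable {G : SimpleGraph V}

lemma edgeVal_ne_zero_iff_of_sqSupport_eq {u : V → F} {S : Set (Sym2 V)}
    (hu : G.sqSupport u = S) {g : Sym2 V} (hg : g ∈ G.edgeSet) : edgeVal u g ≠ 0 ↔ g ∈ S := by
  simp [← hu, sqSupport, hg]

lemma sqSupport_single_one [DecidableEq V] (G : SimpleGraph V) (v : V) :
    G.sqSupport (Pi.single v (1 : F)) = G.incidenceSet v := by
  ext e
  induction e using Sym2.ind with | _ a b => ?_
  simp only [sqSupport, incidenceSet, Set.mem_ofPred_eq, edgeVal_mk, Sym2.mem_iff, mem_edgeSet]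
  by_cases hab : G.Adj a b
  · have := hab.ne
    by_cases hav : a = v <;> by_cases hbv : b = v <;> simp_all [eq_comm]
  · simp [hab]

namespace Walk

lemma eq_neg_one_pow_mul_of_forall_edgeVal_eq_zero {u : V → F} {a b : V} (w : G.Walk a b)
    (h : ∀ g ∈ w.edges, edgeVal u g = 0) : u a = (-1) ^ w.length * u b := by
  induction w with
  | nil => simp
  | @cons a x b hadj p ih =>
    have hax : edgeVal u s(a, x) = 0 := h _ (List.mem_cons_self ..)
    rw [edgeVal_mk, add_eq_zero_iff_eq_neg] at hax
    rw [hax, ih fun g hg => h g (List.mem_cons_of_mem _ hg), length_cons, pow_succ]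
    ring

lemma ne_neg_one_pow_mul_of_count_eq_one [DecidableEq V] {u : V → F} {a b : V}
    (w : G.Walk a b) {f : Sym2 V} (hf : w.edges.count f = 1)
    (h0 : ∀ g ∈ w.edges, g ≠ f → edgeVal u g = 0) (hf0 : edgeVal u f ≠ 0) :
    u a ≠ (-1) ^ w.length * u b := by
  induction w with
  | nil => simp at hf
  | @cons a x b hadj p ih =>
    rw [length_cons, pow_succ]
    by_cases hfirst : s(a, x) = f
    · subst hfirst
      have hp : s(a, x) ∉ p.edges := by
        simpa [edges_cons, List.count_cons, List.count_eq_zero] using hf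
      have hx := p.eq_neg_one_pow_mul_of_forall_edgeVal_eq_zero fun g hg =>
        h0 g (List.mem_cons_of_mem _ hg) (by rintro rfl; exact hp hg)
      intro h
      apply hf0
      rw [edgeVal_mk, h, hx]
      ring
    · have hax : edgeVal u s(a, x) = 0 := h0 _ (List.mem_cons_self ..) hfirst
      rw [edgeVal_mk, add_eq_zero_iff_eq_neg] at hax
      have hp : p.edges.count f = 1 := by
        simpa [edges_cons, List.count_cons, hfirst] using hf
      intro h
      apply ih hp (fun g hg => h0 g (List.mem_cons_of_mem _ hg))
      rw [← neg_inj, ← hax, h]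
      ring

end Walk

end SimpleGraph

end SquareSupport

namespace SimpleGraph

variable {V : Type*} {G : SimpleGraph V}

lemma Walk.IsCycle.exists_cons_perm_edges {u x y : V} {c : G.Walk u u}
    (hc : c.IsCycle) (he : s(x, y) ∈ c.edges) :
    ∃ (h : G.Adj x y) (p : G.Walk y x), (Walk.cons h p).IsCycle ∧
      (Walk.cons h p).edges.Perm c.edges := by
  classical
  have hx : x ∈ c.support := c.fst_mem_support_of_mem_edges he
  have hc' : (c.rotate x hx).IsCycle := hc.rotate hx
  have hperm : (c.rotate x hx).edges.Perm c.edges := (c.rotate_edges x hx).perm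
  suffices ∃ d : G.Walk x x, d.IsCycle ∧ d.snd = y ∧ d.edges.Perm c.edges by
    obtain ⟨d, hd, rfl, hdperm⟩ := this
    refine ⟨d.adj_snd hd.not_nil, d.tail, ?_⟩
    rw [d.cons_tail_eq hd.not_nil]
    exact ⟨hd, hdperm⟩
  have hy : y ∈ (c.rotate x hx).toSubgraph.neighborSet x := by
    rw [Subgraph.mem_neighborSet, ← Subgraph.mem_edgeSet, Walk.mem_edges_toSubgraph]
    exact hperm.mem_iff.2 he
  rcases hc'.neighborSet_toSubgraph_endpoint ▸ hy with hy | hy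
  · exact ⟨_, hc', hy.symm, hperm⟩
  · refine ⟨_, hc'.reverse, by rw [Walk.snd_reverse, hy], ?_⟩
    rw [Walk.edges_reverse]
    exact (List.reverse_perm _).trans hperm

lemma card_edgeSet_deleteEdges_singleton_add_one [Finite V] {e : Sym2 V} (he : e ∈ G.edgeSet) :
    Nat.card (G.deleteEdges {e}).edgeSet + 1 = Nat.card G.edgeSet := by
  rw [edgeSet_deleteEdges, Nat.card_coe_set_eq, Nat.card_coe_set_eq,
    Set.ncard_sdiff_singleton_add_one he]

end SimpleGraph

namespace PairSquare

open SimpleGraph Walk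

variable {V F : Type*} [Field F] {G : SimpleGraph V}

theorem edgeSquare_of_sqSupport_eq_singleton (hps : PairSquare F G) {f : Sym2 V} {w : V → F}
    (hw : G.sqSupport w = {f}) : EdgeSquare F G := by
  have hf : f ∈ G.edgeSet := (hw ▸ Set.mem_singleton f : f ∈ G.sqSupport w).1
  have hwf : edgeVal w f ≠ 0 := (edgeVal_ne_zero_iff_of_sqSupport_eq hw hf).2 rfl
  intro e he
  by_cases hef : e = f
  · exact ⟨w, hef ▸ hw⟩
  obtain ⟨u, hu⟩ := hps e he f hf hef
  refine ⟨u - (edgeVal u f / edgeVal w f) • w, Set.ext fun g => ?_⟩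
  simp only [Set.mem_ofPred_eq, Set.mem_singleton_iff, edgeVal_sub_smul]
  by_cases hgf : g = f
  · subst hgf
    simp [div_mul_cancel₀ _ hwf, Ne.symm hef]
  by_cases hg : g ∈ G.edgeSet
  · have hwg : edgeVal w g = 0 := by
      by_contra h
      exact hgf ((edgeVal_ne_zero_iff_of_sqSupport_eq hw hg).1 h)
    rw [hwg, mul_zero, sub_zero, edgeVal_ne_zero_iff_of_sqSupport_eq hu hg]
    simp [hg, hgf]
  · simp only [hg, false_and, false_iff]
    rintro rfl
    exact hg he

theorem degree_ne_one (hps : PairSquare F G) (hnes : ¬ EdgeSquare F G) (v : V)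
    [Fintype (G.neighborSet v)] : G.degree v ≠ 1 := by
  classical
  intro hv
  obtain ⟨e, he⟩ := Finset.card_eq_one.1 ((G.card_incidenceFinset_eq_degree v).trans hv)
  apply hnes
  refine hps.edgeSquare_of_sqSupport_eq_singleton (f := e) (w := Pi.single v (1 : F)) ?_
  rw [sqSupport_single_one, ← coe_incidenceFinset, he, Finset.coe_singleton]

theorem two_le_degree [Nontrivial V] (hps : PairSquare F G) (hnes : ¬ EdgeSquare F G)
    (hconn : G.Preconnected) (v : V) [Fintype (G.neighborSet v)] : 2 ≤ G.degree v := by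
  have := hconn.degree_pos_of_nontrivial v
  have := hps.degree_ne_one hnes v
  omega

theorem not_even_length_of_count_eq_one (hps : PairSquare F G) [DecidableEq V] {v : V}
    (W : G.Walk v v) {e f : Sym2 V} (hf : W.edges.count f = 1) (he : e ∈ G.edgeSet)
    (heW : e ∉ W.edges) : ¬ Even W.length := by
  intro heven
  have hfW : f ∈ W.edges := List.count_pos_iff.1 (by omega)
  have hfE : f ∈ G.edgeSet := W.edges_subset_edgeSet hfW
  obtain ⟨u, hu⟩ := hps e he f hfE (by rintro rfl; exact heW hfW)
  refine W.ne_neg_one_pow_mul_of_count_eq_one hf (fun g hg hgf => ?_)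
    ((edgeVal_ne_zero_iff_of_sqSupport_eq hu hfE).2 (by simp))
    (by rw [heven.neg_one_pow, one_mul])
  by_contra hne
  rcases (edgeVal_ne_zero_iff_of_sqSupport_eq hu (W.edges_subset_edgeSet hg)).1 hne with rfl | rfl
  exacts [heW hg, hgf rfl]

theorem not_even_length_of_isCycle [Finite V] (hps : PairSquare F G)
    (hlt : Nat.card V < Nat.card G.edgeSet) {v : V} {C : G.Walk v v} (hC : C.IsCycle) :
    ¬ Even C.length := by
  classical
  have := Fintype.ofFinite V
  have hlen : C.length ≤ Nat.card V := by
    have := hC.support_nodup.length_le_card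
    rw [List.length_tail, length_support, add_tsub_cancel_right] at this
    rwa [← Nat.card_eq_fintype_card] at this
  obtain ⟨e, he, heC⟩ := Set.exists_mem_notMem_of_ncard_lt_ncard (s := ↑C.edges.toFinset)
    (t := G.edgeSet) (by
      rw [Set.ncard_coe_finset, List.toFinset_card_of_nodup hC.edges_nodup, length_edges,
        ← Nat.card_coe_set_eq]
      omega)
  obtain ⟨f, hf⟩ := List.exists_mem_of_length_pos
    (by rw [length_edges]; have := hC.three_le_length; omega : 0 < C.edges.length)
  exact hps.not_even_length_of_count_eq_one C (List.count_eq_one_of_mem hC.edges_nodup hf) he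
    (by simpa using heC)

theorem edges_subset_of_odd_isCycle (hps : PairSquare F G) {v w : V}
    {C : G.Walk v v} {D : G.Walk w w} (hC : C.IsCycle) (hD : D.IsCycle)
    (hoC : Odd C.length) (hoD : Odd D.length) {e : Sym2 V}
    (heC : e ∈ C.edges) (heD : e ∈ D.edges) : C.edges ⊆ D.edges := by
  classical
  induction e using Sym2.ind with | _ x y => ?_
  intro f hfC
  by_contra hfD
  obtain ⟨hxy, t₁, hc₁, hp₁⟩ := hC.exists_cons_perm_edges heC
  obtain ⟨hxy', t₂, hc₂, hp₂⟩ := hD.exists_cons_perm_edges heD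
  rw [cons_isCycle_iff] at hc₁ hc₂
  have hlen₁ : C.length = t₁.length + 1 := by
    rw [← length_edges, ← hp₁.length_eq, edges_cons, List.length_cons, length_edges]
  have hlen₂ : D.length = t₂.length + 1 := by
    rw [← length_edges, ← hp₂.length_eq, edges_cons, List.length_cons, length_edges]
  have hf₁ : f ∈ t₁.edges := by
    rcases List.mem_cons.1 (hp₁.mem_iff.2 hfC) with rfl | h
    exacts [absurd heD hfD, h]
  have hf₂ : f ∉ t₂.edges := fun h => hfD (hp₂.mem_iff.1 (List.mem_cons_of_mem _ h))
  refine hps.not_even_length_of_count_eq_one (t₁.append t₂.reverse) (f := f) ?_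
    (G.mem_edgeSet.2 hxy) ?_ ?_
  · rw [edges_append, List.count_append, edges_reverse, List.count_reverse,
      List.count_eq_one_of_mem hc₁.1.edges_nodup hf₁, List.count_eq_zero.2 hf₂]
  · simp [edges_append, hc₁.2, hc₂.2]
  · obtain ⟨a, ha⟩ := hoC
    obtain ⟨b, hb⟩ := hoD
    exact ⟨a + b, by rw [length_append, length_reverse]; omega⟩

theorem exists_edge_disjoint_odd_isCycle [Finite V] (hps : PairSquare F G)
    (hconn : G.Connected) (hlt : Nat.card V < Nat.card G.edgeSet) :
    ∃ (v₁ v₂ : V) (w₁ : G.Walk v₁ v₁) (w₂ : G.Walk v₂ v₂),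
      w₁.IsCycle ∧ w₂.IsCycle ∧ Odd w₁.length ∧ Odd w₂.length ∧
      ∀ e, e ∈ w₁.edges → e ∉ w₂.edges := by
  have hodd {v : V} {C : G.Walk v v} (hC : C.IsCycle) : Odd C.length :=
    Nat.not_even_iff_odd.1 (hps.not_even_length_of_isCycle hlt hC)
  obtain ⟨v₁, C, hC⟩ : ∃ (v : V) (C : G.Walk v v), C.IsCycle := by
    by_contra! hacyc
    have := (isTree_iff_connected_and_card.1 ⟨hconn, hacyc⟩).2
    omega
  obtain ⟨x, y, hxy⟩ : ∃ x y, s(x, y) ∈ C.edges := Sym2.exists.1 <|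
    List.exists_mem_of_length_pos (by rw [length_edges]; have := hC.three_le_length; omega)
  have hconn' : (G.deleteEdges {s(x, y)}).Connected :=
    hconn.connected_delete_edge_of_not_isBridge fun hb => hb.notMem_edges_of_isCycle hC hxy
  obtain ⟨v₂, D, hD⟩ : ∃ (v : V) (D : (G.deleteEdges {s(x, y)}).Walk v v), D.IsCycle := by
    by_contra! hacyc
    have := (isTree_iff_connected_and_card.1 ⟨hconn', hacyc⟩).2
    have := card_edgeSet_deleteEdges_singleton_add_one (C.edges_subset_edgeSet hxy)
    omega
  set D' := D.mapLe (G.deleteEdges_le _)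
  have hD' : D'.IsCycle := (isCycle_mapLe _).2 hD
  have hxyD : s(x, y) ∉ D'.edges := by
    rw [edges_mapLe_eq_edges]
    intro h
    simpa [edgeSet_deleteEdges] using D.edges_subset_edgeSet h
  exact ⟨v₁, v₂, C, D', hC, hD', hodd hC, hodd hD', fun g hgC hgD =>
    hxyD (hps.edges_subset_of_odd_isCycle hC hD' (hodd hC) (hodd hD') hgC hgD hxy)⟩

end PairSquare

theorem pair_square_q_eq_p_add_one_is_doubly_odd_paddle_general
    {V F : Type*} [Fintype V] [Field F]
    (G : SimpleGraph V) [DecidableRel G.Adj]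
    (hconn : G.Connected)
    (hq : G.edgeFinset.card = Fintype.card V + 1)
    (hps : PairSquare F G) (hnes : ¬ EdgeSquare F G) :
    (∀ v : V, 2 ≤ G.degree v) ∧
      (∀ (v : V) (w : G.Walk v v), w.IsCycle → ¬ Even w.length) ∧
      (∃ (v₁ v₂ : V) (w₁ : G.Walk v₁ v₁) (w₂ : G.Walk v₂ v₂),
        w₁.IsCycle ∧ w₂.IsCycle ∧ Odd w₁.length ∧ Odd w₂.length ∧
        ∀ e, e ∈ w₁.edges → e ∉ w₂.edges) := by
  have hlt : Nat.card V < Nat.card G.edgeSet := by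
    rw [Nat.card_eq_fintype_card, Nat.card_eq_fintype_card, ← G.edgeFinset_card, hq]
    omega
  have : Nontrivial V := by
    obtain ⟨e, he⟩ : G.edgeFinset.Nonempty := Finset.card_pos.1 (by omega)
    induction e using Sym2.ind with
    | _ a b => exact (G.mem_edgeFinset.1 he : G.Adj a b).nontrivial
  exact ⟨fun v => hps.two_le_degree hnes hconn.preconnected v,
    fun _ _ hC => hps.not_even_length_of_isCycle hlt hC,
    hps.exists_edge_disjoint_odd_isCycle hconn hlt⟩

theorem pair_square_q_eq_p_add_one_is_doubly_odd_paddle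
    {V F : Type*} [Fintype V] [DecidableEq V] [Field F] [CharZero F]
    (G : SimpleGraph V) [DecidableRel G.Adj]
    (hconn : G.Connected)
    (hq : G.edgeFinset.card = Fintype.card V + 1)
    (hps : PairSquare F G) (hnes : ¬ EdgeSquare F G) :
    (∀ v : V, 2 ≤ G.degree v) ∧
      (∀ (v : V) (w : G.Walk v v), w.IsCycle → ¬ Even w.length) ∧
      (∃ (v₁ v₂ : V) (w₁ : G.Walk v₁ v₁) (w₂ : G.Walk v₂ v₂),
        w₁.IsCycle ∧ w₂.IsCycle ∧ Odd w₁.length ∧ Odd w₂.length ∧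
        ∀ e, e ∈ w₁.edges → e ∉ w₂.edges) :=
  pair_square_q_eq_p_add_one_is_doubly_odd_paddle_general G hconn hq hps hnes
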